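/- arXiv:2406.00502 — 2 statements merged into one kernel-verified Lean document; each statement's English description precedes it below -/
import Mathlib

section
/- Let (s_k) be a nonincreasing sequence of nonnegative reals, α > 1 and β > 0 such that s_{k+1}^α ≤ β(s_k − s_{k+1}) for all sufficiently large k. Then there exists τ > 0 such that s_k ≤ τ k^{−1/(α−1)} for all sufficiently large k. -/
/-!
With `θ = α - 1`, the quantities `s k ^ (-θ)` grow at least linearly in `k` as long as `s` stays
positive. Indeed, by the mean value theorem `s (k+1) ^ (-θ) - s k ^ (-θ)` is at least
`θ (s k - s (k+1)) / s k ^ α`; if `s k ≤ 2 s (k+1)` the recursion bounds this below by a constant,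
and otherwise `s (k+1) ^ (-θ) ≥ 2 ^ θ s k ^ (-θ)` already gains a fixed fraction of `s k₁ ^ (-θ)`.
Inverting `c k ≤ s k ^ (-θ)` gives the rate; if `s` hits zero it stays zero.
-/

open Real Set

theorem mul_sub_div_rpow_le_rpow_neg_sub {θ a b : ℝ} (hθ : 0 < θ) (hb : 0 < b) (hba : b ≤ a) :
    θ * (a - b) / a ^ (θ + 1) ≤ b ^ (-θ) - a ^ (-θ) := by
  rcases hba.eq_or_lt with rfl | hlt
  · simp
  have hderiv : ∀ x ∈ Ioo b a, HasDerivAt (fun x : ℝ ↦ x ^ (-θ)) (-θ * x ^ (-θ - 1)) x :=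
    fun x hx ↦ hasDerivAt_rpow_const (Or.inl (hb.trans hx.1).ne')
  have hcont : ContinuousOn (fun x : ℝ ↦ x ^ (-θ)) (Icc b a) :=
    fun x hx ↦ (continuousAt_rpow_const _ _ (Or.inl (hb.trans_le hx.1).ne')).continuousWithinAt
  obtain ⟨c, ⟨hbc, hca⟩, hslope⟩ := exists_hasDerivAt_eq_slope _ _ hlt hcont hderiv
  have hc : 0 < c := hb.trans hbc
  have hpow : (a ^ (θ + 1))⁻¹ ≤ c ^ (-θ - 1) := by
    rw [← rpow_neg ((hb.trans hlt).le), neg_add']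
    exact rpow_le_rpow_of_nonpos hc hca.le (by linarith)
  rw [eq_div_iff (sub_ne_zero.2 hlt.ne')] at hslope
  calc θ * (a - b) / a ^ (θ + 1) = θ * (a - b) * (a ^ (θ + 1))⁻¹ := div_eq_mul_inv _ _
    _ ≤ θ * (a - b) * c ^ (-θ - 1) := by gcongr
    _ = b ^ (-θ) - a ^ (-θ) := by linarith

theorem rpow_neg_add_min_le_rpow_neg {θ β A a b : ℝ} (hθ : 0 < θ) (hβ : 0 < β) (hb : 0 < b)
    (hba : b ≤ a) (haA : a ≤ A) (hrec : b ^ (θ + 1) ≤ β * (a - b)) :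
    a ^ (-θ) + min (θ / (β * 2 ^ (θ + 1))) ((2 ^ θ - 1) * A ^ (-θ)) ≤ b ^ (-θ) := by
  have ha : 0 < a := hb.trans_le hba
  rcases le_total a (2 * b) with h2 | h2
  · have hgain : θ / (β * 2 ^ (θ + 1)) ≤ θ * (a - b) / a ^ (θ + 1) := by
      have hdist : b ^ (θ + 1) / β ≤ a - b := by rwa [div_le_iff₀' hβ]
      calc θ / (β * 2 ^ (θ + 1)) = θ * (b ^ (θ + 1) / β) / (2 * b) ^ (θ + 1) := by
            rw [mul_rpow zero_le_two hb.le]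
            field_simp
        _ ≤ θ * (a - b) / a ^ (θ + 1) := by gcongr
    linarith [min_le_left (θ / (β * 2 ^ (θ + 1))) ((2 ^ θ - 1) * A ^ (-θ)),
      mul_sub_div_rpow_le_rpow_neg_sub hθ hb hba]
  · have h2θ : 1 ≤ (2 : ℝ) ^ θ := one_le_rpow one_le_two hθ.le
    have hhalf : 2 ^ θ * a ^ (-θ) ≤ b ^ (-θ) := by
      calc 2 ^ θ * a ^ (-θ) = (a / 2) ^ (-θ) := by
            rw [div_rpow ha.le zero_le_two, rpow_neg zero_le_two, div_inv_eq_mul, mul_comm]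
        _ ≤ b ^ (-θ) := rpow_le_rpow_of_nonpos hb (by linarith) (by linarith)
    have hA : (2 ^ θ - 1) * A ^ (-θ) ≤ (2 ^ θ - 1) * a ^ (-θ) :=
      mul_le_mul_of_nonneg_left (rpow_le_rpow_of_nonpos ha haA (by linarith)) (by linarith)
    linarith [min_le_right (θ / (β * 2 ^ (θ + 1))) ((2 ^ θ - 1) * A ^ (-θ))]

theorem exists_mul_le_rpow_neg_of_recursive_decrease {s : ℕ → ℝ} {θ β : ℝ} {k₁ : ℕ}
    (hθ : 0 < θ) (hβ : 0 < β) (hmono : Antitone s) (hpos : ∀ k ≥ k₁, 0 < s k)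
    (hrec : ∀ k ≥ k₁, s (k + 1) ^ (θ + 1) ≤ β * (s k - s (k + 1))) :
    ∃ c > 0, ∀ n : ℕ, c * n ≤ s (k₁ + n) ^ (-θ) := by
  set c := min (θ / (β * 2 ^ (θ + 1))) ((2 ^ θ - 1) * s k₁ ^ (-θ))
  have hc : 0 < c := by
    have : 1 < (2 : ℝ) ^ θ := one_lt_rpow one_lt_two hθ
    have : 0 < s k₁ ^ (-θ) := rpow_pos_of_pos (hpos k₁ le_rfl) _
    apply lt_min <;> positivity
  have hstep : ∀ n : ℕ, s (k₁ + n) ^ (-θ) + c ≤ s (k₁ + (n + 1)) ^ (-θ) := fun n ↦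
    rpow_neg_add_min_le_rpow_neg hθ hβ (hpos _ (by omega)) (hmono (by omega)) (hmono (by omega))
      (hrec (k₁ + n) (by omega))
  have hgrowth : ∀ n : ℕ, s k₁ ^ (-θ) + c * n ≤ s (k₁ + n) ^ (-θ) := by
    intro n
    induction n with
    | zero => simp
    | succ n ih => push_cast; linarith [hstep n]
  refine ⟨c, hc, fun n ↦ ?_⟩
  linarith [hgrowth n, rpow_nonneg (hpos k₁ le_rfl).le (-θ)]

theorem exists_le_mul_rpow_of_mul_le_rpow_neg {s : ℕ → ℝ} {θ c : ℝ} {k₁ : ℕ} (hθ : 0 < θ)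
    (hc : 0 < c) (hpos : ∀ k ≥ k₁, 0 < s k) (hgrowth : ∀ n : ℕ, c * n ≤ s (k₁ + n) ^ (-θ)) :
    ∃ τ : ℝ, 0 < τ ∧ ∃ k₀ : ℕ, ∀ k ≥ k₀, s k ≤ τ * (k : ℝ) ^ (-(1 / θ)) := by
  refine ⟨(c / 2) ^ (-(1 / θ)), by positivity, 2 * k₁ + 1, fun k hk ↦ ?_⟩
  obtain ⟨n, rfl⟩ := Nat.exists_eq_add_of_le (show k₁ ≤ k by omega)
  have hkn : (k₁ : ℝ) + 1 ≤ n := by exact_mod_cast (show k₁ + 1 ≤ n by omega)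
  -- `n ≥ k / 2` once `k > 2 k₁`
  have hhalf : c / 2 * ((k₁ + n : ℕ) : ℝ) ≤ s (k₁ + n) ^ (-θ) := by
    refine le_trans ?_ (hgrowth n)
    push_cast
    nlinarith
  have hk : (0 : ℝ) < (k₁ + n : ℕ) := Nat.cast_pos.2 (by omega)
  have hinv := (le_rpow_inv_iff_of_neg (hpos _ (by omega)) (by positivity)
    (neg_neg_of_pos hθ)).2 hhalf
  rwa [mul_rpow (by positivity) (by positivity), inv_neg, ← one_div] at hinv

/-- Sublinear-rate case (`α > 1`) of the recursive decrease lemma. -/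
theorem stmt_7 (s : ℕ → ℝ) (hmono : Antitone s) (hnonneg : ∀ k, 0 ≤ s k)
    (α β : ℝ) (hα : 1 < α) (hβ : 0 < β)
    (hrec : ∃ k₁ : ℕ, ∀ k ≥ k₁, s (k + 1) ^ α ≤ β * (s k - s (k + 1))) :
    ∃ τ : ℝ, 0 < τ ∧ ∃ k₀ : ℕ, ∀ k ≥ k₀,
      s k ≤ τ * (k : ℝ) ^ (-(1 / (α - 1)) : ℝ) := by
  obtain ⟨k₁, hrec⟩ := hrec
  have hθ : 0 < α - 1 := sub_pos.2 hα
  by_cases hpos : ∀ k ≥ k₁, 0 < s k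
  · obtain ⟨c, hc, hgrowth⟩ := exists_mul_le_rpow_neg_of_recursive_decrease hθ hβ hmono hpos
      (by simpa only [sub_add_cancel] using hrec)
    exact exists_le_mul_rpow_of_mul_le_rpow_neg hθ hc hpos hgrowth
  · push Not at hpos
    obtain ⟨k₂, -, hk₂⟩ := hpos
    refine ⟨1, one_pos, k₂, fun k hk ↦ ?_⟩
    rw [le_antisymm ((hmono hk).trans hk₂) (hnonneg k)]
    positivity
end

section
/- Let (r_n) be a sequence of nonnegative reals with r_{n-1} > 0 for all n ≥ 1, such that Σ_{n≥1} r_n / √(r_{n-1}) < ∞ and r_0 < ∞. Then Σ_{n≥0} √(r_n) < ∞. -/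
/-- If `Σ r_n / √(r_{n−1}) < ∞` for a positive sequence, then `Σ √(r_n) < ∞`. -/
theorem stmt_11 (r : ℕ → ℝ) (hpos : ∀ n, 0 < r n)
    (hsum : Summable (fun n => r (n + 1) / Real.sqrt (r n))) :
    Summable (fun n => Real.sqrt (r n)) := by
  set s := fun n => Real.sqrt (r n) with hs
  have hspos : ∀ n, 0 < s n := fun n => Real.sqrt_pos.2 (hpos n)
  set A := ∑' n, r (n + 1) / Real.sqrt (r n) with hA
  have hanneg : ∀ n, 0 ≤ r (n + 1) / Real.sqrt (r n) :=
    fun n => div_nonneg (hpos _).le (Real.sqrt_nonneg _)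
  have hAnn : 0 ≤ A := tsum_nonneg hanneg
  have hkey : ∀ n, 2 * s (n + 1) ≤ r (n + 1) / Real.sqrt (r n) + s n := by
    intro n
    have e1 : s (n + 1) * s (n + 1) = r (n + 1) := Real.mul_self_sqrt (hpos _).le
    have e2 : s n * s n = r n := Real.mul_self_sqrt (hpos _).le
    have hsq := mul_self_nonneg (s (n + 1) - s n)
    have hdiv : r (n + 1) / Real.sqrt (r n) = r (n + 1) / s n := rfl
    rw [hdiv, div_add' _ _ _ (hspos n).ne', le_div_iff₀ (hspos n)]
    nlinarith [hspos n, hspos (n + 1)]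
  apply summable_of_sum_range_le (c := 2 * s 0 + A) (fun n => Real.sqrt_nonneg _)
  intro n
  cases n with
  | zero =>
    simp only [Finset.range_zero, Finset.sum_empty]
    have := Real.sqrt_nonneg (r 0)
    simp only [hs]
    linarith
  | succ n =>
    have hsub : ∑ i ∈ Finset.range n, s i ≤ ∑ i ∈ Finset.range (n + 1), s i :=
      Finset.sum_le_sum_of_subset_of_nonneg (Finset.range_subset_range.2 (Nat.le_succ n))
        (fun i _ _ => Real.sqrt_nonneg _)
    have hAn : ∑ i ∈ Finset.range n, r (i + 1) / Real.sqrt (r i) ≤ A :=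
      Summable.sum_le_tsum _ (fun i _ => hanneg i) hsum
    have h1 : ∑ i ∈ Finset.range (n + 1), s i
        = (∑ i ∈ Finset.range n, s (i + 1)) + s 0 := Finset.sum_range_succ' s n
    have h2 : ∑ i ∈ Finset.range n, s (i + 1)
        ≤ ∑ i ∈ Finset.range n, (r (i + 1) / Real.sqrt (r i) + s i) / 2 := by
      apply Finset.sum_le_sum
      intro i _
      linarith [hkey i]
    have h3 : ∑ i ∈ Finset.range n, (r (i + 1) / Real.sqrt (r i) + s i) / 2
        = ((∑ i ∈ Finset.range n, r (i + 1) / Real.sqrt (r i))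
            + ∑ i ∈ Finset.range n, s i) / 2 := by
      rw [← Finset.sum_add_distrib, ← Finset.sum_div]
    calc ∑ i ∈ Finset.range (n + 1), s i
        = (∑ i ∈ Finset.range n, s (i + 1)) + s 0 := h1
      _ ≤ 2 * s 0 + A := by
          rw [h1] at hsub
          linarith [h2, h3.le, hAn]
end
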